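/- Let G be a real Lie group with Lie algebra 𝔤 equipped with a norm. Then there exists κ > 0 such that for every g ∈ G, ‖Ad(g^{-1})‖ ≤ ‖Ad(g)‖^κ; consequently, for nonzero v ∈ 𝔤, log(1/‖Ad(g)v‖) − log(1/‖v‖) ≤ κ·log‖Ad(g)‖. -/

import Mathlib

/-!
Let `K` be the set of operators of norm `≤ 1` and determinant `±1`; by a recurrence argument on
powers these are isometries, and `K` is a compact group. Far from `K` the norm is bounded away
from `1`, and the adjugate bound `‖T⁻¹‖ ≤ C ‖T‖ ^ (n - 1)` gives the claim with a large exponent.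
Near `K`, translating by a nearest point of `K` reduces to `T = 1 + X` with `‖X‖ = dist(T, K)`;
then `‖T⁻¹‖ ≤ 1 / (1 - ‖X‖)`, and everything rests on the linear growth `‖T‖ - 1 ≥ c ‖X‖`. If
that failed along `T i = 1 + e i • Y i` with `Y i → Y`, the powers `T i ^ m i` with
`m i * e i ≈ τ` would have norms tending to `1` and accumulate at some `W ∈ K` with
`‖W - 1 - τ • Y‖ ≤ τ ^ 2`; but then an element `T i` with `e i = τ` and `Y i` close to `Y`
would be closer than `τ` to `K`.
-/

open Asymptotics Filter Metric Module Topology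

namespace UnimodularOpNorm

section NormedRing

variable {R : Type*} [NormedRing R]

theorem norm_units_mul {u : Rˣ} (hu : ‖(u : R)‖ ≤ 1) (hu' : ‖(↑u⁻¹ : R)‖ ≤ 1) (x : R) :
    ‖(u : R) * x‖ = ‖x‖ := by
  refine le_antisymm ((norm_mul_le _ _).trans (mul_le_of_le_one_left (norm_nonneg x) hu)) ?_
  calc ‖x‖ = ‖(↑u⁻¹ : R) * (u * x)‖ := by rw [Units.inv_mul_cancel_left]
    _ ≤ ‖(u : R) * x‖ := (norm_mul_le _ _).trans (mul_le_of_le_one_left (norm_nonneg _) hu')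

theorem norm_mul_units {u : Rˣ} (hu : ‖(u : R)‖ ≤ 1) (hu' : ‖(↑u⁻¹ : R)‖ ≤ 1) (x : R) :
    ‖x * u‖ = ‖x‖ := by
  refine le_antisymm ((norm_mul_le _ _).trans (mul_le_of_le_one_right (norm_nonneg x) hu)) ?_
  calc ‖x‖ = ‖x * u * (↑u⁻¹ : R)‖ := by rw [Units.mul_inv_cancel_right]
    _ ≤ ‖x * u‖ := (norm_mul_le _ _).trans (mul_le_of_le_one_right (norm_nonneg _) hu')

theorem exists_tendsto_pow_one [ProperSpace R] {u : Rˣ} {B C : ℝ}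
    (hpow : ∀ k : ℕ, ‖(u : R) ^ k‖ ≤ B) (hinv : ∀ k : ℕ, ‖(↑u⁻¹ : R) ^ k‖ ≤ C) :
    ∃ m : ℕ → ℕ, (∀ j, 1 ≤ m j) ∧ Tendsto (fun j => (u : R) ^ m j) atTop (𝓝 1) := by
  obtain ⟨L, -, φ, hφ, hφL⟩ := (isCompact_closedBall (0 : R) B).tendsto_subseq
    (x := fun k => (u : R) ^ k) fun k => mem_closedBall_zero_iff.mpr (hpow k)
  have hgap : ∀ j, φ j + (φ (j + 1) - φ j) = φ (j + 1) := fun j =>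
    Nat.add_sub_cancel' (hφ (Nat.lt_succ_self j)).le
  refine ⟨fun j => φ (j + 1) - φ j, fun j => Nat.sub_pos_of_lt (hφ (Nat.lt_succ_self j)), ?_⟩
  have hdiff : Tendsto (fun j => (u : R) ^ φ (j + 1) - (u : R) ^ φ j) atTop (𝓝 0) := by
    simpa using (hφL.comp (tendsto_add_atTop_nat 1)).sub hφL
  have hfactor : ∀ a m : ℕ,
      (u : R) ^ m - 1 = (↑u⁻¹ : R) ^ a * ((u : R) ^ (a + m) - (u : R) ^ a) := fun a m => by
    simp only [mul_sub, ← Units.val_pow_eq_pow_val, ← Units.val_mul, pow_add, inv_pow,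
      inv_mul_cancel_left, inv_mul_cancel, Units.val_one]
  rw [← tendsto_sub_nhds_zero_iff]
  refine squeeze_zero_norm (fun j => ?_) (by simpa using hdiff.norm.const_mul C)
  rw [hfactor (φ j), hgap j]
  exact (norm_mul_le _ _).trans (mul_le_mul_of_nonneg_right (hinv _) (norm_nonneg _))

variable [NormOneClass R]

theorem norm_pow_le_exp (x : R) (m : ℕ) : ‖x ^ m‖ ≤ Real.exp (m * (‖x‖ - 1)) := by
  calc ‖x ^ m‖ ≤ ‖x‖ ^ m := norm_pow_le x m
    _ ≤ Real.exp (‖x‖ - 1) ^ m := by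
        gcongr; linarith [Real.add_one_le_exp (‖x‖ - 1)]
    _ = Real.exp (m * (‖x‖ - 1)) := (Real.exp_nat_mul _ m).symm

theorem norm_pow_sub_one_sub_nsmul_le (x : R) (m : ℕ) :
    ‖x ^ m - 1 - m • (x - 1)‖ ≤ (1 + ‖x - 1‖) ^ m - 1 - m * ‖x - 1‖ := by
  induction m with
  | zero => simp
  | succ m ih =>
    have hx : ‖x‖ ≤ 1 + ‖x - 1‖ := by
      simpa [norm_one] using norm_le_norm_add_norm_sub' x 1
    have hstep : x ^ (m + 1) - 1 - (m + 1) • (x - 1)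
        = x * (x ^ m - 1 - m • (x - 1)) + m • (x - 1) ^ 2 := by
      rw [mul_sub, mul_sub, mul_smul_comm, ← pow_succ', mul_one, succ_nsmul]
      simp only [sq, smul_sub, mul_sub, sub_mul, mul_one, one_mul]
      abel
    calc ‖x ^ (m + 1) - 1 - (m + 1) • (x - 1)‖
        ≤ ‖x‖ * ‖x ^ m - 1 - m • (x - 1)‖ + m * ‖x - 1‖ ^ 2 := by
          rw [hstep]
          refine (norm_add_le _ _).trans (add_le_add (norm_mul_le _ _) ?_)
          exact norm_nsmul_le.trans (by gcongr; exact norm_pow_le _ 2)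
      _ ≤ (1 + ‖x - 1‖) * ((1 + ‖x - 1‖) ^ m - 1 - m * ‖x - 1‖) + m * ‖x - 1‖ ^ 2 := by
          gcongr
      _ = (1 + ‖x - 1‖) ^ (m + 1) - 1 - ↑(m + 1) * ‖x - 1‖ := by push_cast; ring

theorem norm_pow_sub_one_sub_nsmul_le_sq (x : R) {m : ℕ} (hm : m * ‖x - 1‖ ≤ 1) :
    ‖x ^ m - 1 - m • (x - 1)‖ ≤ (m * ‖x - 1‖) ^ 2 := by
  set y := m * ‖x - 1‖
  have hy : 0 ≤ y := by positivity
  have hexp : (1 + ‖x - 1‖) ^ m ≤ Real.exp y := by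
    calc (1 + ‖x - 1‖) ^ m ≤ Real.exp ‖x - 1‖ ^ m := by
          gcongr; linarith [Real.add_one_le_exp ‖x - 1‖]
      _ = Real.exp y := (Real.exp_nat_mul _ m).symm
  have hquad := (abs_le.mp (Real.abs_exp_sub_one_sub_id_le (x := y) (by rwa [abs_of_nonneg hy]))).2
  linarith [norm_pow_sub_one_sub_nsmul_le x m]

theorem norm_inv_mul_one_sub_le (u : Rˣ) : ‖(↑u⁻¹ : R)‖ * (1 - ‖(u : R) - 1‖) ≤ 1 := by
  have h : (↑u⁻¹ : R) = ↑u⁻¹ * (1 - u) + 1 := by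
    rw [mul_sub, mul_one, Units.inv_mul, sub_add_cancel]
  have hle : ‖(↑u⁻¹ : R)‖ ≤ ‖(↑u⁻¹ : R)‖ * ‖(u : R) - 1‖ + 1 := by
    calc ‖(↑u⁻¹ : R)‖ = ‖↑u⁻¹ * (1 - (u : R)) + 1‖ := congrArg norm h
      _ ≤ ‖(↑u⁻¹ : R)‖ * ‖(u : R) - 1‖ + 1 := by
        rw [norm_sub_rev (u : R) 1, ← norm_one (α := R)]
        exact (norm_add_le _ _).trans (by gcongr; exact norm_mul_le _ _)
  linarith

theorem norm_inv_le_one_of_tendsto_pow [HasSummableGeomSeries R] {u : Rˣ} (hu : ‖(u : R)‖ ≤ 1)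
    {m : ℕ → ℕ} (hm : ∀ j, 1 ≤ m j) (hlim : Tendsto (fun j => (u : R) ^ m j) atTop (𝓝 1)) :
    ‖(↑u⁻¹ : R)‖ ≤ 1 := by
  have hinv : Tendsto (fun j => Ring.inverse ((u : R) ^ m j)) atTop (𝓝 1) := by
    have h := (NormedRing.inverse_continuousAt (1 : Rˣ)).tendsto
    rw [Units.val_one, Ring.inverse_one] at h
    exact h.comp hlim
  refine ge_of_tendsto (by simpa only [norm_one] using hinv.norm)
    (Eventually.of_forall fun j => ?_)
  obtain ⟨k, hk⟩ := Nat.exists_eq_add_of_le' (hm j)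
  have hfactor : (↑u⁻¹ : R) = ↑(u ^ k) * Ring.inverse ((u : R) ^ m j) := by
    rw [← Units.val_pow_eq_pow_val, Ring.inverse_unit, ← Units.val_mul, hk, pow_succ',
      mul_inv_rev, mul_inv_cancel_left]
  rw [hfactor]
  refine (norm_mul_le _ _).trans (mul_le_of_le_one_left (norm_nonneg _) ?_)
  rw [Units.val_pow_eq_pow_val]
  exact (norm_pow_le _ _).trans (pow_le_one₀ (norm_nonneg _) hu)

end NormedRing

section Determinant

variable {E : Type*} [NormedAddCommGroup E] [NormedSpace ℝ E]

theorem det_one : (1 : E →L[ℝ] E).det = 1 :=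
  map_one LinearMap.det

theorem det_mul (T S : E →L[ℝ] E) : (T * S).det = T.det * S.det :=
  map_mul LinearMap.det (T : E →ₗ[ℝ] E) S

theorem det_pow (T : E →L[ℝ] E) (k : ℕ) : (T ^ k).det = T.det ^ k :=
  (congrArg LinearMap.det (ContinuousLinearMap.toLinearMap_pow T k)).trans (map_pow _ _ _)

theorem abs_det_inv_eq_one {u : (E →L[ℝ] E)ˣ} (hu : |(u : E →L[ℝ] E).det| = 1) :
    |(↑u⁻¹ : E →L[ℝ] E).det| = 1 := by
  have h := congrArg (fun T : E →L[ℝ] E => |T.det|) u.inv_mul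
  simpa only [det_mul, abs_mul, hu, mul_one, det_one, abs_one] using h

variable [FiniteDimensional ℝ E]

noncomputable def toMatrixAlgEquiv :
    (E →L[ℝ] E) ≃ₐ[ℝ] Matrix (Fin (finrank ℝ E)) (Fin (finrank ℝ E)) ℝ :=
  (Module.End.toContinuousLinearMap E).symm.trans (LinearMap.toMatrixAlgEquiv (finBasis ℝ E))

theorem det_toMatrixAlgEquiv (T : E →L[ℝ] E) : (toMatrixAlgEquiv T).det = T.det :=
  LinearMap.det_toMatrix (finBasis ℝ E) (T : E →ₗ[ℝ] E)

theorem continuous_toMatrixAlgEquiv : Continuous (toMatrixAlgEquiv (E := E)) :=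
  (toMatrixAlgEquiv (E := E)).toLinearEquiv.toLinearMap.continuous_of_finiteDimensional

theorem continuous_toMatrixAlgEquiv_symm : Continuous (toMatrixAlgEquiv (E := E)).symm :=
  (toMatrixAlgEquiv (E := E)).symm.toLinearEquiv.toLinearMap.continuous_of_finiteDimensional

theorem isUnit_of_det_ne_zero {T : E →L[ℝ] E} (h : T.det ≠ 0) : IsUnit T := by
  rw [← MulEquiv.isUnit_map (toMatrixAlgEquiv (E := E)), Matrix.isUnit_iff_isUnit_det,
    det_toMatrixAlgEquiv]
  exact h.isUnit

noncomputable def adjugate (T : E →L[ℝ] E) : E →L[ℝ] E :=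
  toMatrixAlgEquiv.symm (toMatrixAlgEquiv T).adjugate

theorem adjugate_mul (T : E →L[ℝ] E) : adjugate T * T = T.det • 1 := by
  apply toMatrixAlgEquiv.injective
  rw [map_mul, adjugate, AlgEquiv.apply_symm_apply, Matrix.adjugate_mul, map_smul, map_one,
    det_toMatrixAlgEquiv]

theorem adjugate_smul (c : ℝ) (T : E →L[ℝ] E) :
    adjugate (c • T) = c ^ (finrank ℝ E - 1) • adjugate T := by
  rw [adjugate, map_smul, Matrix.adjugate_smul, map_smul, Fintype.card_fin, adjugate]

theorem continuous_adjugate : Continuous (adjugate (E := E)) :=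
  continuous_toMatrixAlgEquiv_symm.comp continuous_toMatrixAlgEquiv.matrix_adjugate

theorem adjugate_units (u : (E →L[ℝ] E)ˣ) :
    adjugate (u : E →L[ℝ] E) = (u : E →L[ℝ] E).det • (↑u⁻¹ : E →L[ℝ] E) := by
  rw [← one_mul (↑u⁻¹ : E →L[ℝ] E), ← smul_mul_assoc, ← adjugate_mul, mul_assoc,
    Units.mul_inv, mul_one]

theorem exists_norm_adjugate_le :
    ∃ C, 0 ≤ C ∧ ∀ T : E →L[ℝ] E, ‖adjugate T‖ ≤ C * ‖T‖ ^ (finrank ℝ E - 1) := by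
  obtain ⟨C, hC⟩ := (isCompact_closedBall (0 : E →L[ℝ] E) 1).exists_bound_of_continuousOn
    continuous_adjugate.continuousOn
  refine ⟨C, (norm_nonneg _).trans (hC 0 (mem_closedBall_self zero_le_one)), fun T => ?_⟩
  have hS : ‖T‖⁻¹ • T ∈ closedBall (0 : E →L[ℝ] E) 1 := by
    rw [mem_closedBall_zero_iff, norm_smul, norm_inv, norm_norm]
    exact inv_mul_le_one_of_le₀ le_rfl (norm_nonneg T)
  have hT : T = ‖T‖ • (‖T‖⁻¹ • T) := by
    rcases eq_or_ne T 0 with rfl | hT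
    · simp
    · rw [smul_inv_smul₀ (norm_ne_zero_iff.mpr hT)]
  calc ‖adjugate T‖ = ‖T‖ ^ (finrank ℝ E - 1) * ‖adjugate (‖T‖⁻¹ • T)‖ := by
        conv_lhs => rw [hT, adjugate_smul, norm_smul, norm_pow, norm_norm]
    _ ≤ ‖T‖ ^ (finrank ℝ E - 1) * C := by gcongr; exact hC _ hS
    _ = C * ‖T‖ ^ (finrank ℝ E - 1) := mul_comm _ _

theorem exists_abs_det_mul_norm_inv_le :
    ∃ C, 0 ≤ C ∧ ∀ u : (E →L[ℝ] E)ˣ,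
      |(u : E →L[ℝ] E).det| * ‖(↑u⁻¹ : E →L[ℝ] E)‖ ≤ C * ‖(u : E →L[ℝ] E)‖ ^ (finrank ℝ E - 1) := by
  obtain ⟨C, hC0, hC⟩ := exists_norm_adjugate_le (E := E)
  refine ⟨C, hC0, fun u => ?_⟩
  rw [← Real.norm_eq_abs, ← norm_smul, ← adjugate_units]
  exact hC u

theorem one_le_norm_of_abs_det_eq_one [Nontrivial E] {T : E →L[ℝ] E} (hT : |T.det| = 1) :
    1 ≤ ‖T‖ := by
  by_contra! hlt
  have hlim := ((ContinuousLinearMap.continuous_det.tendsto 0).comp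
    (tendsto_pow_atTop_nhds_zero_of_norm_lt_one hlt)).abs
  simp only [Function.comp_def, det_pow, abs_pow, hT, one_pow] at hlim
  have h0 : (0 : E →L[ℝ] E).det = 0 := by
    rw [ContinuousLinearMap.det, ContinuousLinearMap.toLinearMap_zero, LinearMap.det_zero,
      zero_pow finrank_pos.ne']
  rw [h0, abs_zero] at hlim
  exact one_ne_zero (tendsto_nhds_unique tendsto_const_nhds hlim)

theorem norm_inv_le_one_of_norm_le_one [Nontrivial E] {u : (E →L[ℝ] E)ˣ}
    (hdet : |(u : E →L[ℝ] E).det| = 1) (hu : ‖(u : E →L[ℝ] E)‖ ≤ 1) :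
    ‖(↑u⁻¹ : E →L[ℝ] E)‖ ≤ 1 := by
  obtain ⟨C, hC0, hC⟩ := exists_abs_det_mul_norm_inv_le (E := E)
  have hpow : ∀ k : ℕ, ‖(u : E →L[ℝ] E) ^ k‖ ≤ 1 := fun k =>
    (norm_pow_le _ k).trans (pow_le_one₀ (norm_nonneg _) hu)
  have hinv : ∀ k : ℕ, ‖(↑u⁻¹ : E →L[ℝ] E) ^ k‖ ≤ C := fun k => by
    have h := hC (u ^ k)
    rw [Units.val_pow_eq_pow_val, det_pow, abs_pow, hdet, one_pow, one_mul, ← inv_pow,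
      Units.val_pow_eq_pow_val] at h
    exact h.trans (mul_le_of_le_one_right hC0 (pow_le_one₀ (norm_nonneg _) (hpow k)))
  obtain ⟨m, hm, hlim⟩ := exists_tendsto_pow_one hpow hinv
  exact norm_inv_le_one_of_tendsto_pow hu hm hlim

end Determinant

section Contractions

variable (E : Type*) [NormedAddCommGroup E] [NormedSpace ℝ E]

def unimodularContractions : Set (E →L[ℝ] E) := {T | ‖T‖ ≤ 1 ∧ |T.det| = 1}

variable {E}

theorem one_mem_unimodularContractions [Nontrivial E] : 1 ∈ unimodularContractions E :=
  ⟨norm_one.le, by rw [det_one, abs_one]⟩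

theorem mul_mem_unimodularContractions {T S : E →L[ℝ] E} (hT : T ∈ unimodularContractions E)
    (hS : S ∈ unimodularContractions E) : T * S ∈ unimodularContractions E :=
  ⟨(norm_mul_le T S).trans (mul_le_one₀ hT.1 (norm_nonneg S) hS.1),
    by rw [det_mul, abs_mul, hT.2, hS.2, one_mul]⟩

variable [FiniteDimensional ℝ E]

theorem isCompact_unimodularContractions : IsCompact (unimodularContractions E) :=
  (isCompact_closedBall 0 1).of_isClosed_subset
    ((isClosed_le continuous_norm continuous_const).inter
      (isClosed_eq ContinuousLinearMap.continuous_det.abs continuous_const))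
    fun _ hT => mem_closedBall_zero_iff.mpr hT.1

theorem exists_units_of_mem_unimodularContractions [Nontrivial E] {T : E →L[ℝ] E}
    (hT : T ∈ unimodularContractions E) :
    ∃ k : (E →L[ℝ] E)ˣ, (k : E →L[ℝ] E) = T ∧ (↑k⁻¹ : E →L[ℝ] E) ∈ unimodularContractions E := by
  obtain ⟨k, rfl⟩ := isUnit_of_det_ne_zero (T := T) fun h => by simpa [h] using hT.2
  exact ⟨k, rfl, norm_inv_le_one_of_norm_le_one hT.2 hT.1, abs_det_inv_eq_one hT.2⟩

-- `c = k⁻¹ * u` for a point `k` of `unimodularContractions E` nearest to `u`.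
theorem exists_units_norm_sub_one_eq_infDist [Nontrivial E] (u : (E →L[ℝ] E)ˣ)
    (hu : |(u : E →L[ℝ] E).det| = 1) :
    ∃ c : (E →L[ℝ] E)ˣ, ‖(c : E →L[ℝ] E)‖ = ‖(u : E →L[ℝ] E)‖ ∧
      ‖(↑c⁻¹ : E →L[ℝ] E)‖ = ‖(↑u⁻¹ : E →L[ℝ] E)‖ ∧ |(c : E →L[ℝ] E).det| = 1 ∧
      ‖(c : E →L[ℝ] E) - 1‖ = infDist (u : E →L[ℝ] E) (unimodularContractions E) ∧
      ∀ W ∈ unimodularContractions E, ‖(c : E →L[ℝ] E) - 1‖ ≤ ‖(c : E →L[ℝ] E) - W‖ := by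
  obtain ⟨k, hkK, hk⟩ := isCompact_unimodularContractions.exists_infDist_eq_dist
    ⟨1, one_mem_unimodularContractions⟩ (u : E →L[ℝ] E)
  obtain ⟨v, rfl, hvK⟩ := exists_units_of_mem_unimodularContractions hkK
  have hnorm := norm_units_mul hvK.1 (by rw [inv_inv]; exact hkK.1)
  have hdist : ∀ S, ‖(↑(v⁻¹ * u) : E →L[ℝ] E) - ↑v⁻¹ * S‖ = dist (u : E →L[ℝ] E) S := fun S => by
    rw [Units.val_mul, ← mul_sub, hnorm, dist_eq_norm]
  refine ⟨v⁻¹ * u, ?_, ?_, ?_, ?_, fun W hW => ?_⟩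
  · rw [Units.val_mul, hnorm]
  · rw [mul_inv_rev, inv_inv, Units.val_mul, norm_mul_units hkK.1 hvK.1]
  · rw [Units.val_mul, det_mul, abs_mul, hvK.2, hu, one_mul]
  · rw [hk, ← hdist, Units.inv_mul]
  · calc ‖(↑(v⁻¹ * u) : E →L[ℝ] E) - 1‖ = infDist (u : E →L[ℝ] E) (unimodularContractions E) := by
          rw [hk, ← hdist, Units.inv_mul]
      _ ≤ dist (u : E →L[ℝ] E) (v * W) :=
          infDist_le_dist_of_mem (mul_mem_unimodularContractions hkK hW)
      _ = ‖(↑(v⁻¹ * u) : E →L[ℝ] E) - W‖ := by rw [← hdist, Units.inv_mul_cancel_left]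

end Contractions

section Growth

variable {E : Type*} [NormedAddCommGroup E] [NormedSpace ℝ E] [FiniteDimensional ℝ E] [Nontrivial E]

/-- The direction `Y` is tangent to `unimodularContractions E` at `1`: the powers
`T i ^ ⌈τ / ‖T i - 1‖⌉₊` accumulate at a point of it within `τ ^ 2` of `1 + τ • Y`. -/
theorem exists_mem_norm_sub_one_sub_smul_le {T : ℕ → E →L[ℝ] E} {Y : E →L[ℝ] E}
    (hdet : ∀ i, |(T i).det| = 1) (hpos : ∀ i, 0 < ‖T i - 1‖)
    (hlim : Tendsto (fun i => ‖T i - 1‖) atTop (𝓝 0))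
    (ho : (fun i => ‖T i‖ - 1) =o[atTop] fun i => ‖T i - 1‖)
    (hY : Tendsto (fun i => ‖T i - 1‖⁻¹ • (T i - 1)) atTop (𝓝 Y)) {τ : ℝ} (hτ : 0 < τ)
    (hτ1 : τ < 1) :
    ∃ W ∈ unimodularContractions E, ‖W - 1 - τ • Y‖ ≤ τ ^ 2 := by
  set e := fun i => ‖T i - 1‖
  set ε := fun i => (‖T i‖ - 1) / e i
  set m : ℕ → ℕ := fun i => ⌈τ / e i⌉₊
  set s : ℕ → ℝ := fun i => m i * e i
  have hs_ge : ∀ i, τ ≤ s i := fun i => (div_le_iff₀ (hpos i)).mp (Nat.le_ceil _)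
  have hs_le : ∀ i, s i ≤ τ + e i := fun i => by
    have := mul_le_mul_of_nonneg_right (Nat.ceil_lt_add_one (div_pos hτ (hpos i)).le).le
      (hpos i).le
    rwa [add_mul, div_mul_cancel₀ _ (hpos i).ne', one_mul] at this
  have hs : Tendsto s atTop (𝓝 τ) := tendsto_of_tendsto_of_tendsto_of_le_of_le tendsto_const_nhds
    (by simpa using hlim.const_add τ) hs_ge hs_le
  have hpow_norm : ∀ i, ‖T i ^ m i‖ ≤ Real.exp (ε i * s i) := fun i =>
    (norm_pow_le_exp _ _).trans (Real.exp_le_exp.mpr (le_of_eq (by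
      simp only [ε, s]; field_simp [show e i ≠ 0 from (hpos i).ne'])))
  have hexp : Tendsto (fun i => Real.exp (ε i * s i)) atTop (𝓝 1) := by
    simpa using (ho.tendsto_div_nhds_zero.mul hs).rexp
  obtain ⟨W, -, φ, hφ, hW⟩ := (isCompact_closedBall (0 : E →L[ℝ] E) 2).tendsto_subseq'
    ((hexp.eventually_lt_const one_lt_two).mono fun i hi =>
      mem_closedBall_zero_iff.mpr ((hpow_norm i).trans hi.le)).frequently
  have hφ' := hφ.tendsto_atTop
  have hWK : W ∈ unimodularContractions E := by
    refine ⟨le_of_tendsto_of_tendsto' hW.norm (hexp.comp hφ') fun i => hpow_norm _, ?_⟩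
    have hdetW := ((ContinuousLinearMap.continuous_det.tendsto W).comp hW).abs
    simp only [Function.comp_def, det_pow, abs_pow, hdet, one_pow] at hdetW
    exact tendsto_nhds_unique hdetW tendsto_const_nhds
  have hsmul : ∀ i, (m i) • (T i - 1) = s i • ((e i)⁻¹ • (T i - 1)) := fun i => by
    rw [smul_smul, mul_assoc, mul_inv_cancel₀ (hpos i).ne', mul_one, Nat.cast_smul_eq_nsmul]
  have hclose : ∀ᶠ i in atTop,
      ‖T (φ i) ^ m (φ i) - 1 - s (φ i) • ((e (φ i))⁻¹ • (T (φ i) - 1))‖ ≤ s (φ i) ^ 2 := by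
    filter_upwards [(hs.comp hφ').eventually_le_const hτ1] with i hi
    rw [← hsmul]
    exact norm_pow_sub_one_sub_nsmul_le_sq _ hi
  refine ⟨W, hWK, le_of_tendsto_of_tendsto ?_ ((hs.comp hφ').pow 2) hclose⟩
  exact ((hW.sub_const 1).sub ((hs.comp hφ').smul (hY.comp hφ'))).norm

theorem not_isLittleO_norm_sub_one {T : ℕ → E →L[ℝ] E} (hdet : ∀ i, |(T i).det| = 1)
    (hpos : ∀ i, 0 < ‖T i - 1‖) (hlim : Tendsto (fun i => ‖T i - 1‖) atTop (𝓝 0))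
    (hnearest : ∀ i, ∀ W ∈ unimodularContractions E, ‖T i - 1‖ ≤ ‖T i - W‖) :
    ¬(fun i => ‖T i‖ - 1) =o[atTop] fun i => ‖T i - 1‖ := by
  intro ho
  set e := fun i => ‖T i - 1‖
  have hsphere : ∀ i, (e i)⁻¹ • (T i - 1) ∈ sphere (0 : E →L[ℝ] E) 1 := fun i => by
    rw [mem_sphere_zero_iff_norm, norm_smul, norm_inv, norm_norm, inv_mul_cancel₀ (hpos i).ne']
  obtain ⟨Y, -, ψ, hψ, hY⟩ := (isCompact_sphere (0 : E →L[ℝ] E) 1).tendsto_subseq hsphere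
  have hψ' := hψ.tendsto_atTop
  have hYψ : Tendsto (fun i => ‖(e (ψ i))⁻¹ • (T (ψ i) - 1) - Y‖) atTop (𝓝 0) := by
    simpa using (hY.sub_const Y).norm
  obtain ⟨J, hYJ, hJ⟩ := ((hYψ.eventually_lt_const (by norm_num : (0 : ℝ) < 1 / 4)).and
    ((hlim.comp hψ').eventually_lt_const (by norm_num : (0 : ℝ) < 1 / 2))).exists
  set τ := e (ψ J)
  have hτ : τ < 1 / 2 := hJ
  obtain ⟨W, hWK, hW⟩ := exists_mem_norm_sub_one_sub_smul_le (T := T ∘ ψ) (fun i => hdet _)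
    (fun i => hpos _) (hlim.comp hψ') (ho.comp_tendsto hψ') hY (hpos (ψ J)) (by linarith)
  -- At the scale `τ`, `W` is closer to `T (ψ J)` than `1` is.
  have hTJ : T (ψ J) - 1 = τ • ((e (ψ J))⁻¹ • (T (ψ J) - 1)) := by
    rw [smul_smul, mul_inv_cancel₀ (hpos _).ne', one_smul]
  have hle : τ ≤ τ * (1 / 4) + τ ^ 2 := calc
    τ ≤ ‖T (ψ J) - W‖ := hnearest _ W hWK
    _ = ‖τ • ((e (ψ J))⁻¹ • (T (ψ J) - 1) - Y) - (W - 1 - τ • Y)‖ := by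
        rw [smul_sub, ← hTJ]; congr 1; abel
    _ ≤ τ * ‖(e (ψ J))⁻¹ • (T (ψ J) - 1) - Y‖ + τ ^ 2 := by
        refine (norm_sub_le _ _).trans (add_le_add ?_ hW)
        rw [norm_smul, Real.norm_of_nonneg (hpos _).le]
    _ ≤ τ * (1 / 4) + τ ^ 2 := by gcongr
  nlinarith [hpos (ψ J)]

theorem exists_mul_norm_sub_one_le_norm_sub_one :
    ∃ c > 0, ∃ δ > 0, ∀ T : E →L[ℝ] E, |T.det| = 1 → ‖T - 1‖ ≤ δ →
      (∀ W ∈ unimodularContractions E, ‖T - 1‖ ≤ ‖T - W‖) → c * ‖T - 1‖ ≤ ‖T‖ - 1 := by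
  by_contra! h
  choose T hdet hsmall hnearest hlt using fun j : ℕ =>
    h (1 / (j + 1)) Nat.one_div_pos_of_nat (1 / (j + 1)) Nat.one_div_pos_of_nat
  have hpos : ∀ j, 0 < ‖T j - 1‖ := fun j => by
    refine (norm_nonneg _).lt_of_ne fun h0 => ?_
    simpa [sub_eq_zero.mp (norm_eq_zero.mp h0.symm)] using hlt j
  refine not_isLittleO_norm_sub_one hdet hpos
    (squeeze_zero (fun j => (hpos j).le) hsmall tendsto_one_div_add_atTop_nhds_zero_nat)
    hnearest ((isLittleO_iff_tendsto' (.of_forall fun j h => absurd h (hpos j).ne')).mpr ?_)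
  refine squeeze_zero (fun j => div_nonneg ?_ (hpos j).le) (fun j => ?_)
    tendsto_one_div_add_atTop_nhds_zero_nat
  · linarith [one_le_norm_of_abs_det_eq_one (hdet j)]
  · exact (div_le_iff₀ (hpos j)).mpr (hlt j).le

theorem exists_norm_inv_le_rpow_of_infDist_le :
    ∃ δ > 0, ∃ κ : ℝ, 0 < κ ∧ ∀ u : (E →L[ℝ] E)ˣ, |(u : E →L[ℝ] E).det| = 1 →
      infDist (u : E →L[ℝ] E) (unimodularContractions E) ≤ δ →
      ‖(↑u⁻¹ : E →L[ℝ] E)‖ ≤ ‖(u : E →L[ℝ] E)‖ ^ κ := by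
  obtain ⟨c, hc, δ, hδ, hgrowth⟩ := exists_mul_norm_sub_one_le_norm_sub_one (E := E)
  refine ⟨min δ (1 / 2), by positivity, max 1 (2 / c), by positivity, fun u hu hdist => ?_⟩
  obtain ⟨v, hvnorm, hvinv, hvdet, hve, hvnearest⟩ := exists_units_norm_sub_one_eq_infDist u hu
  set e := ‖(v : E →L[ℝ] E) - 1‖
  have he : e ≤ min δ (1 / 2) := hve ▸ hdist
  have hgrow : c * e ≤ ‖(u : E →L[ℝ] E)‖ - 1 :=
    hvnorm ▸ hgrowth v hvdet (he.trans (min_le_left _ _)) hvnearest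
  have hinv : ‖(↑u⁻¹ : E →L[ℝ] E)‖ * (1 - e) ≤ 1 := hvinv ▸ norm_inv_mul_one_sub_le v
  have he0 : 0 ≤ e := norm_nonneg _
  have he2 : e ≤ 1 / 2 := he.trans (min_le_right _ _)
  calc ‖(↑u⁻¹ : E →L[ℝ] E)‖ ≤ 1 + 2 * e := by nlinarith [norm_nonneg (↑u⁻¹ : E →L[ℝ] E)]
    _ ≤ 1 + max 1 (2 / c) * (‖(u : E →L[ℝ] E)‖ - 1) := by
        have : 2 * e ≤ 2 / c * (‖(u : E →L[ℝ] E)‖ - 1) := by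
          rw [div_mul_eq_mul_div, le_div_iff₀ hc]; linarith
        nlinarith [le_max_right 1 (2 / c), mul_nonneg hc.le he0]
    _ ≤ (1 + (‖(u : E →L[ℝ] E)‖ - 1)) ^ max 1 (2 / c) :=
        one_add_mul_self_le_rpow_one_add (by linarith [norm_nonneg (u : E →L[ℝ] E)])
          (le_max_left _ _)
    _ = ‖(u : E →L[ℝ] E)‖ ^ max 1 (2 / c) := by rw [add_sub_cancel]

end Growth

section Bounds

variable {E : Type*} [NormedAddCommGroup E] [NormedSpace ℝ E] [FiniteDimensional ℝ E]

theorem exists_one_add_le_norm_of_lt_infDist {δ : ℝ} (hδ : 0 < δ) :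
    ∃ η > 0, ∀ T : E →L[ℝ] E, |T.det| = 1 → δ < infDist T (unimodularContractions E) →
      1 + η ≤ ‖T‖ := by
  set F := {T : E →L[ℝ] E | ‖T‖ ≤ 2 ∧ |T.det| = 1 ∧ δ ≤ infDist T (unimodularContractions E)}
  have hF : IsCompact F := (isCompact_closedBall 0 2).of_isClosed_subset
    ((isClosed_le continuous_norm continuous_const).inter
      ((isClosed_eq ContinuousLinearMap.continuous_det.abs continuous_const).inter
        (isClosed_le continuous_const (continuous_infDist_pt _))))
    fun _ hT => mem_closedBall_zero_iff.mpr hT.1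
  have hF1 : ∀ T ∈ F, 1 < ‖T‖ := fun T hT => by
    by_contra! hle
    have := infDist_zero_of_mem (show T ∈ unimodularContractions E from ⟨hle, hT.2.1⟩)
    linarith [hT.2.2]
  obtain ⟨a, ha1, ha⟩ := hF.exists_forall_le' continuous_norm.continuousOn hF1
  refine ⟨min (a - 1) 1, by simp [ha1], fun T hT hTδ => ?_⟩
  by_cases h2 : ‖T‖ ≤ 2
  · linarith [ha T ⟨h2, hT, hTδ.le⟩, min_le_left (a - 1) 1]
  · linarith [min_le_right (a - 1) 1]

theorem exists_norm_inv_le_rpow_of_one_add_le {η : ℝ} (hη : 0 < η) :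
    ∃ κ : ℝ, 0 < κ ∧ ∀ u : (E →L[ℝ] E)ˣ, |(u : E →L[ℝ] E).det| = 1 →
      1 + η ≤ ‖(u : E →L[ℝ] E)‖ → ‖(↑u⁻¹ : E →L[ℝ] E)‖ ≤ ‖(u : E →L[ℝ] E)‖ ^ κ := by
  obtain ⟨C, -, hC⟩ := exists_abs_det_mul_norm_inv_le (E := E)
  obtain ⟨N, hN⟩ := pow_unbounded_of_one_lt (max C 1) (lt_add_of_pos_right 1 hη)
  have hN0 : N ≠ 0 := by
    rintro rfl
    simp at hN
  refine ⟨(N + (finrank ℝ E - 1) : ℕ), by positivity, fun u hu hη' => ?_⟩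
  have h1 := hC u
  rw [hu, one_mul] at h1
  rw [Real.rpow_natCast, pow_add]
  calc ‖(↑u⁻¹ : E →L[ℝ] E)‖ ≤ C * ‖(u : E →L[ℝ] E)‖ ^ (finrank ℝ E - 1) := h1
    _ ≤ ‖(u : E →L[ℝ] E)‖ ^ N * ‖(u : E →L[ℝ] E)‖ ^ (finrank ℝ E - 1) := by
        gcongr
        exact (le_max_left C 1).trans (hN.le.trans (pow_le_pow_left₀ (by linarith) hη' N))

theorem exists_norm_inv_le_rpow :
    ∃ κ : ℝ, 0 < κ ∧ ∀ u : (E →L[ℝ] E)ˣ, |(u : E →L[ℝ] E).det| = 1 →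
      ‖(↑u⁻¹ : E →L[ℝ] E)‖ ≤ ‖(u : E →L[ℝ] E)‖ ^ κ := by
  rcases subsingleton_or_nontrivial E with hE | hE
  · refine ⟨1, one_pos, fun u _ => ?_⟩
    rw [Subsingleton.elim (↑u⁻¹ : E →L[ℝ] E) 0, norm_zero]
    positivity
  obtain ⟨δ, hδ, κ₁, hκ₁, hnear⟩ := exists_norm_inv_le_rpow_of_infDist_le (E := E)
  obtain ⟨η, hη, hfar⟩ := exists_one_add_le_norm_of_lt_infDist (E := E) hδ
  obtain ⟨κ₂, hκ₂, hfar'⟩ := exists_norm_inv_le_rpow_of_one_add_le (E := E) hη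
  refine ⟨max κ₁ κ₂, lt_max_of_lt_left hκ₁, fun u hu => ?_⟩
  have h1 := one_le_norm_of_abs_det_eq_one hu
  rcases le_or_gt (infDist (u : E →L[ℝ] E) (unimodularContractions E)) δ with h | h
  · exact (hnear u hu h).trans (Real.rpow_le_rpow_of_exponent_le h1 (le_max_left _ _))
  · exact (hfar' u hu (hfar _ hu h)).trans (Real.rpow_le_rpow_of_exponent_le h1 (le_max_right _ _))

end Bounds

theorem log_inv_norm_apply_sub_le {E : Type*} [NormedAddCommGroup E] [NormedSpace ℝ E]
    {e : E ≃L[ℝ] E} {κ : ℝ} (he : ‖(e.symm : E →L[ℝ] E)‖ ≤ ‖(e : E →L[ℝ] E)‖ ^ κ) {v : E}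
    (hv : v ≠ 0) :
    Real.log (1 / ‖e v‖) - Real.log (1 / ‖v‖) ≤ κ * Real.log ‖(e : E →L[ℝ] E)‖ := by
  have hev : 0 < ‖e v‖ := norm_pos_iff.mpr (e.map_ne_zero_iff.mpr hv)
  have he0 : 0 < ‖(e : E →L[ℝ] E)‖ :=
    norm_pos_iff.mpr fun h => hev.ne' (by simp [← ContinuousLinearEquiv.coe_coe, h])
  have hle : ‖v‖ ≤ ‖(e : E →L[ℝ] E)‖ ^ κ * ‖e v‖ := calc
    ‖v‖ = ‖(e.symm : E →L[ℝ] E) (e v)‖ := by simp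
    _ ≤ ‖(e.symm : E →L[ℝ] E)‖ * ‖e v‖ := ContinuousLinearMap.le_opNorm _ _
    _ ≤ ‖(e : E →L[ℝ] E)‖ ^ κ * ‖e v‖ := by gcongr
  have hlog := Real.log_le_log (norm_pos_iff.mpr hv) hle
  rw [Real.log_mul (Real.rpow_pos_of_pos he0 κ).ne' hev.ne', Real.log_rpow he0] at hlog
  rw [one_div, one_div, Real.log_inv, Real.log_inv]
  linarith

end UnimodularOpNorm

theorem stmt18 {G E : Type*} [Group G] [NormedAddCommGroup E] [NormedSpace ℝ E]
    [FiniteDimensional ℝ E] (Ad : G →* (E ≃L[ℝ] E))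
    (hdet : ∀ g : G, |LinearMap.det ((Ad g : E →L[ℝ] E) : E →ₗ[ℝ] E)| = 1) :
    ∃ κ : ℝ, 0 < κ ∧ ∀ g : G,
      ‖((Ad g⁻¹ : E ≃L[ℝ] E) : E →L[ℝ] E)‖ ≤ ‖((Ad g : E ≃L[ℝ] E) : E →L[ℝ] E)‖ ^ κ ∧
      ∀ v : E, v ≠ 0 →
        Real.log (1 / ‖(Ad g) v‖) - Real.log (1 / ‖v‖)
          ≤ κ * Real.log ‖((Ad g : E ≃L[ℝ] E) : E →L[ℝ] E)‖ := by
  obtain ⟨κ, hκ, hbound⟩ := UnimodularOpNorm.exists_norm_inv_le_rpow (E := E)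
  refine ⟨κ, hκ, fun g => ?_⟩
  have hg : ‖((Ad g⁻¹ : E ≃L[ℝ] E) : E →L[ℝ] E)‖ ≤ ‖((Ad g : E ≃L[ℝ] E) : E →L[ℝ] E)‖ ^ κ := by
    rw [map_inv]
    exact hbound ((ContinuousLinearEquiv.unitsEquiv ℝ E).symm (Ad g)) (hdet g)
  exact ⟨hg, fun v hv => UnimodularOpNorm.log_inv_norm_apply_sub_le (by rwa [map_inv] at hg) hv⟩
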